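/- Let $A = k[x]$ for a field $k$. The factroids of $A$ are exactly the sets $C_n = \{f \in A \mid \deg f \leq n\}$ for $n \in \mathbb{N} \cup \{-\infty, +\infty\}$ (where $C_{-\infty} = \{0\}$ and $C_{\infty} = A$); moreover, each $C_n$ with $n$ finite is the factroid generated by any single polynomial of degree $n$. -/
import Mathlib


open Polynomial

/-- A factroid of `k[x]`: an additive subgroup `F` such that `f * g ∈ F` with
`f ≠ 0` implies `g ∈ F`. -/
def IsFactroid {k : Type*} [Field k] (F : Set k[X]) : Prop :=
  (0 : k[X]) ∈ F ∧ (∀ x ∈ F, ∀ y ∈ F, x + y ∈ F) ∧ (∀ x ∈ F, -x ∈ F) ∧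
    ∀ f g : k[X], f ≠ 0 → f * g ∈ F → g ∈ F

section aux

variable {k : Type*} [Field k]

lemma factroid_C_mul {F : Set k[X]} (hF : IsFactroid F) {g : k[X]} (hg : g ∈ F) (c : k) :
    C c * g ∈ F := by
  rcases eq_or_ne c 0 with rfl | hc
  · simpa using hF.1
  · apply hF.2.2.2 (C c⁻¹) _ (by simpa using hc)
    rwa [← mul_assoc, ← C_mul, inv_mul_cancel₀ hc, C_1, one_mul]

lemma factroid_C_mem {F : Set k[X]} (hF : IsFactroid F) {g : k[X]} (hg : g ∈ F)
    (hg0 : g ≠ 0) (c : k) : C c ∈ F := by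
  have h1 : (1 : k[X]) ∈ F := hF.2.2.2 g 1 hg0 (by simpa using hg)
  simpa using factroid_C_mul hF h1 c

/-- Key lemma: a factroid containing an element of degree `d` contains every
polynomial of degree at most `d`. -/
lemma factroid_key {F : Set k[X]} (hF : IsFactroid F) :
    ∀ d : ℕ, ∀ g ∈ F, g.degree = (d : WithBot ℕ) →
      ∀ h : k[X], h.degree ≤ (d : WithBot ℕ) → h ∈ F := by
  intro d
  induction d with
  | zero =>
    intro g hg hgd h hh
    have hg0 : g ≠ 0 := fun hz => by simp [hz] at hgd
    have hhe : h = C (h.coeff 0) := eq_C_of_degree_le_zero (by exact_mod_cast hh)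
    have : C (h.coeff 0) ∈ F := factroid_C_mem hF hg hg0 _
    rwa [hhe]
  | succ m ih =>
    intro g hg hgd h hh
    have hg0 : g ≠ 0 := fun hz =>
      WithBot.bot_ne_coe (a := m + 1) (by rw [hz, degree_zero] at hgd; exact_mod_cast hgd)
    have hgnat : g.natDegree = m + 1 := natDegree_eq_of_degree_eq_some hgd
    have ha : g.leadingCoeff ≠ 0 := leadingCoeff_ne_zero.2 hg0
    set a := g.leadingCoeff with ha_def
    set b := h.coeff (m + 1) with hb_def
    set r := h - C (b / a) * g with hr_def
    -- the scalar multiple of g is in F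
    have hsm : C (b / a) * g ∈ F := factroid_C_mul hF hg _
    -- r has degree ≤ m
    have hrdeg : r.degree ≤ (m : WithBot ℕ) := by
      rw [degree_le_iff_coeff_zero]
      intro j hj
      have hj' : m + 1 ≤ j := by exact_mod_cast Nat.add_one_le_iff.mpr (by exact_mod_cast hj)
      rcases eq_or_lt_of_le hj' with hje | hjl
      · subst hje
        have hgc : g.coeff (m + 1) = a := by rw [ha_def, leadingCoeff, hgnat]
        simp only [hr_def, coeff_sub, coeff_C_mul, hgc]
        rw [div_mul_cancel₀ _ ha, hb_def, sub_self]
      · have h1 : h.coeff j = 0 := coeff_eq_zero_of_degree_lt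
          (lt_of_le_of_lt hh (by exact_mod_cast hjl))
        have h2 : g.coeff j = 0 := coeff_eq_zero_of_degree_lt
          (by rw [hgd]; exact_mod_cast hjl)
        simp [hr_def, h1, h2]
    -- divX g is in F and has degree m
    have hXdvd : X * g.divX ∈ F := by
      have : X * g.divX = g + (-C (g.coeff 0)) := by
        have := X_mul_divX_add g
        linear_combination this
      rw [this]
      exact hF.2.1 _ hg _ (hF.2.2.1 _ (factroid_C_mem hF hg hg0 _))
    have hdivX_mem : g.divX ∈ F := hF.2.2.2 X _ X_ne_zero hXdvd
    have hdivX_ne : g.divX ≠ 0 := fun hz => by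
      have hc : g.coeff (m + 1) = 0 := by rw [← coeff_divX, hz, coeff_zero]
      apply ha
      rw [ha_def, leadingCoeff, hgnat]
      exact hc
    have hdivX_deg : g.divX.degree = (m : WithBot ℕ) := by
      have hnat : g.divX.natDegree = m := by
        rw [natDegree_divX_eq_natDegree_tsub_one, hgnat]
        omega
      rw [degree_eq_natDegree hdivX_ne, hnat]
    have hr_mem : r ∈ F := ih g.divX hdivX_mem hdivX_deg r hrdeg
    have : C (b / a) * g + r ∈ F := hF.2.1 _ hsm _ hr_mem
    simpa [hr_def] using this

/-- `C_n` is a factroid. -/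
lemma isFactroid_Cn (n : WithBot ℕ) : IsFactroid {f : k[X] | f.degree ≤ n} := by
  refine ⟨by simp, fun x hx y hy => ?_, fun x hx => by simpa using hx, fun f g hf hfg => ?_⟩
  · exact le_trans (degree_add_le x y) (max_le hx hy)
  · have : g.degree ≤ (f * g).degree := by
      rw [degree_mul]
      exact le_add_of_nonneg_left (zero_le_degree_iff.2 hf)
    exact le_trans this hfg

end aux

/-- The factroids of `A = k[x]` are exactly `A` itself together with the sets
`C_n = {f | deg f ≤ n}` for `n ∈ ℕ ∪ {-∞}`; moreover each `C_n` with `n` finite is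
the factroid generated by any single polynomial of degree `n`. -/
theorem stmt_15 {k : Type*} [Field k] :
    (∀ F : Set k[X], IsFactroid F ↔
      (F = Set.univ ∨ ∃ n : WithBot ℕ, F = {f : k[X] | f.degree ≤ n})) ∧
    (∀ (n : ℕ) (p : k[X]), p.degree = (n : WithBot ℕ) →
      {f : k[X] | f.degree ≤ (n : WithBot ℕ)} =
        ⋂₀ {F : Set k[X] | IsFactroid F ∧ p ∈ F}) := by
  constructor
  · intro F
    constructor
    · intro hF
      by_cases htriv : ∀ f ∈ F, f = (0 : k[X])
      · right
        refine ⟨⊥, Set.ext fun f => ?_⟩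
        simp only [Set.mem_setOf_eq, le_bot_iff, degree_eq_bot]
        exact ⟨fun hf => htriv f hf, fun hf => hf ▸ hF.1⟩
      · push_neg at htriv
        obtain ⟨g₀, hg₀F, hg₀⟩ := htriv
        by_cases hbdd : ∃ m : ℕ, ∀ f ∈ F, f.degree ≤ (m : WithBot ℕ)
        · right
          -- degrees are bounded; take the max degree
          obtain ⟨m, hm⟩ := hbdd
          set S : Set ℕ := {d : ℕ | ∃ f ∈ F, f.degree = (d : WithBot ℕ)} with hS_def
          have hS_ne : S.Nonempty := ⟨g₀.natDegree, g₀, hg₀F, degree_eq_natDegree hg₀⟩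
          have hS_bdd : BddAbove S := by
            refine ⟨m, fun d hd => ?_⟩
            obtain ⟨f, hfF, hfd⟩ := hd
            exact_mod_cast hfd ▸ hm f hfF
          set n := sSup S with hn_def
          have hnS : n ∈ S := Nat.sSup_mem hS_ne hS_bdd
          obtain ⟨g, hgF, hgd⟩ := hnS
          refine ⟨(n : WithBot ℕ), Set.ext fun f => ⟨fun hf => ?_, fun hf => ?_⟩⟩
          · rcases eq_or_ne f 0 with rfl | hf0
            · simp
            · have : f.natDegree ∈ S := ⟨f, hf, degree_eq_natDegree hf0⟩
              have : f.natDegree ≤ n := le_csSup hS_bdd this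
              simp only [Set.mem_setOf_eq]
              rw [degree_eq_natDegree hf0]
              exact_mod_cast this
          · exact factroid_key hF n g hgF hgd f hf
        · left
          push_neg at hbdd
          ext f
          simp only [Set.mem_univ, iff_true]
          obtain ⟨g, hgF, hgd⟩ := hbdd f.natDegree
          have hg0 : g ≠ 0 := fun hz => by
            rw [hz, degree_zero] at hgd
            exact not_lt_bot hgd
          have hfd : f.degree ≤ g.degree := le_trans (degree_le_natDegree) (le_of_lt hgd)
          exact factroid_key hF g.natDegree g hgF (degree_eq_natDegree hg0) f
            (hfd.trans_eq (degree_eq_natDegree hg0))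
    · rintro (rfl | ⟨n, rfl⟩)
      · exact ⟨trivial, fun _ _ _ _ => trivial, fun _ _ => trivial, fun _ _ _ _ => trivial⟩
      · exact isFactroid_Cn n
  · intro n p hp
    apply Set.eq_of_subset_of_subset
    · intro f hf
      rintro F ⟨hF, hpF⟩
      exact factroid_key hF n p hpF hp f hf
    · intro f hf
      exact hf {g : k[X] | g.degree ≤ (n : WithBot ℕ)} ⟨isFactroid_Cn n, le_of_eq hp⟩
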